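/- Let e ≥ 2 be an integer, μ a rational number, r a positive integer with r ≤ e−1, and m_1, …, m_r positive integers. For a rational number g let H_g(x) := (1/(e−1)!) · ∏_{j=1}^{e−1} (x + j) · (−μ·x + 1 − g) and let K(H_g) := ∑_{S ⊆ {1,…,r}} (−1)^{|S|} H_g(x − σ_S), σ_S = ∑_{i∈S} m_i. Then for all rational g_1, g_2, the coefficient of x^{e−r} of K(H_{g_1}) equals that of K(H_{g_2}), and the difference of the coefficients of x^{e−r−1} satisfies coeff_{e−r−1}(K(H_{g_1})) − coeff_{e−r−1}(K(H_{g_2})) = −(∏_{i=1}^{r} m_i) · (g_1 − g_2)/(e−1−r)!. -/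

import Mathlib

/-!
The Koszul sum is linear in the polynomial, and it factors as a composite of the difference
operators `f ↦ f(X) - f(X - c)`, each of which lowers the degree by one and multiplies the top
coefficient by `(deg f) · c`. Since `H_{g₁} - H_{g₂}` is `(g₂ - g₁)/(e-1)!` times a monic
polynomial of degree `e - 1`, its Koszul sum has degree at most `e - 1 - r`, with top coefficient
`(g₂ - g₁)/(e-1)! · ∏ mᵢ · (e-1)!/(e-1-r)!`.
-/

open Polynomial Finset

namespace Polynomial

variable {R : Type*} [CommRing R]

theorem coeff_taylor_of_natDegree_le {f : R[X]} {n : ℕ} (hf : f.natDegree ≤ n) (r : R) :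
    (taylor r f).coeff n = f.coeff n := by
  rcases hf.lt_or_eq with hlt | rfl
  · rw [coeff_eq_zero_of_natDegree_lt hlt,
      coeff_eq_zero_of_natDegree_lt (by rwa [natDegree_taylor])]
  · exact coeff_taylor_natDegree r f

theorem coeff_taylor_of_natDegree_le_succ {f : R[X]} {n : ℕ} (hf : f.natDegree ≤ n + 1) (r : R) :
    (taylor r f).coeff n = f.coeff n + (n + 1) * r * f.coeff (n + 1) := by
  have hdeg : (hasseDeriv n f).natDegree < 2 := by
    have := natDegree_hasseDeriv_le f n
    omega
  rw [taylor_coeff, eval_eq_sum_range' hdeg, sum_range_succ, sum_range_one, hasseDeriv_coeff,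
    hasseDeriv_coeff, zero_add, Nat.choose_self, add_comm 1 n, Nat.choose_succ_self_right]
  push_cast
  ring

theorem natDegree_sub_taylor_le {f : R[X]} {n : ℕ} (hf : f.natDegree ≤ n + 1) (r : R) :
    (f - taylor r f).natDegree ≤ n := by
  rw [natDegree_le_iff_coeff_eq_zero]
  intro k hk
  rw [coeff_sub, sub_eq_zero]
  rcases (Nat.succ_le_of_lt hk).lt_or_eq with hlt | rfl
  · rw [coeff_eq_zero_of_natDegree_lt (by omega),
      coeff_eq_zero_of_natDegree_lt (by rw [natDegree_taylor]; omega)]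
  · exact (coeff_taylor_of_natDegree_le hf r).symm

theorem coeff_sub_taylor_neg {f : R[X]} {n : ℕ} (hf : f.natDegree ≤ n + 1) (c : R) :
    (f - taylor (-c) f).coeff n = (n + 1) * c * f.coeff (n + 1) := by
  rw [coeff_sub, coeff_taylor_of_natDegree_le_succ hf]
  ring

theorem monic_prod_X_add_C {ι : Type*} (s : Finset ι) (a : ι → R) :
    (∏ i ∈ s, (X + C (a i))).Monic :=
  monic_prod_of_monic _ _ fun _ _ => monic_X_add_C _

theorem natDegree_prod_X_add_C [Nontrivial R] {ι : Type*} (s : Finset ι) (a : ι → R) :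
    (∏ i ∈ s, (X + C (a i))).natDegree = #s := by
  rw [natDegree_prod_of_monic _ _ fun _ _ => monic_X_add_C _]
  simp

/-- The Koszul alternating sum `f ↦ ∑_{S ⊆ s} (-1)^|S| f(X - σ_S)`, `σ_S = ∑_{i ∈ S} m i`;
note `taylor c f = f(X + c)`. -/
noncomputable def koszulSum {ι : Type*} (m : ι → R) (s : Finset ι) : R[X] →ₗ[R] R[X] :=
  ∑ S ∈ s.powerset, (-1 : R) ^ S.card • taylor (-∑ i ∈ S, m i)

section koszulSum

variable {ι : Type*} (m : ι → R)

theorem koszulSum_apply (s : Finset ι) (f : R[X]) :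
    koszulSum m s f = ∑ S ∈ s.powerset, (-1 : R) ^ S.card • taylor (-∑ i ∈ S, m i) f := by
  simp [koszulSum, LinearMap.sum_apply]

@[simp]
theorem koszulSum_empty (f : R[X]) : koszulSum m ∅ f = f := by
  simp [koszulSum_apply]

theorem koszulSum_insert [DecidableEq ι] {s : Finset ι} {a : ι} (ha : a ∉ s) (f : R[X]) :
    koszulSum m (insert a s) f = koszulSum m s (f - taylor (-m a) f) := by
  rw [koszulSum_apply, koszulSum_apply, sum_powerset_insert ha]
  simp only [map_sub, smul_sub, sum_sub_distrib, taylor_taylor]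
  rw [sub_eq_add_neg, ← sum_neg_distrib]
  congr 1
  refine sum_congr rfl fun S hS => ?_
  have haS : a ∉ S := fun h => ha (mem_powerset.1 hS h)
  rw [card_insert_of_notMem haS, sum_insert haS, pow_succ, mul_neg_one, neg_smul, neg_add,
    add_comm (-m a)]

theorem natDegree_koszulSum_le (s : Finset ι) {d : ℕ} {f : R[X]}
    (hf : f.natDegree ≤ d + #s) : (koszulSum m s f).natDegree ≤ d := by
  classical
  induction s using Finset.induction_on generalizing d f with
  | empty => simpa using hf
  | insert a s ha ih =>
    rw [card_insert_of_notMem ha, ← add_assoc] at hf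
    rw [koszulSum_insert m ha]
    exact ih (natDegree_sub_taylor_le hf _)

theorem coeff_koszulSum (s : Finset ι) {d : ℕ} {f : R[X]}
    (hf : f.natDegree ≤ d + #s) :
    (koszulSum m s f).coeff d =
      (d + #s).descFactorial #s * (∏ i ∈ s, m i) * f.coeff (d + #s) := by
  classical
  induction s using Finset.induction_on generalizing d f with
  | empty => simp
  | insert a s ha ih =>
    rw [card_insert_of_notMem ha, ← add_assoc] at hf ⊢
    rw [koszulSum_insert m ha, ih (natDegree_sub_taylor_le hf _), coeff_sub_taylor_neg hf,
      prod_insert ha, Nat.succ_descFactorial_succ]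
    push_cast
    ring

end koszulSum

end Polynomial

theorem genus_derivative_hilbert_coeffs_general (e : ℕ) (he : 2 ≤ e) (μ : ℚ)
    (r : ℕ) (hre : r ≤ e - 1) (m : Fin r → ℕ)
    (g₁ g₂ : ℚ) :
    let H : ℚ → Polynomial ℚ := fun g =>
      C (1 / ((e - 1).factorial : ℚ)) *
        (∏ j ∈ Finset.range (e - 1), (X + C ((j : ℚ) + 1))) *
        (-(C μ) * X + C (1 - g))
    let K : ℚ → Polynomial ℚ := fun g =>
      ∑ S : Finset (Fin r), (-1 : Polynomial ℚ) ^ S.card *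
        (H g).comp (X - C ((∑ i ∈ S, m i : ℕ) : ℚ))
    (K g₁).coeff (e - r) = (K g₂).coeff (e - r) ∧
    (K g₁).coeff (e - r - 1) - (K g₂).coeff (e - r - 1)
      = -(∏ i, (m i : ℚ)) * (g₁ - g₂) / ((e - 1 - r).factorial : ℚ) := by
  intro H K
  set M : ℚ[X] := ∏ j ∈ range (e - 1), (X + C ((j : ℚ) + 1))
  have hK : ∀ g, K g = koszulSum (fun i => (m i : ℚ)) univ (H g) := fun g => by
    simp only [K, koszulSum_apply, powerset_univ, taylor_apply, smul_eq_C_mul, map_pow, map_neg,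
      map_one, Nat.cast_sum, ← sub_eq_add_neg]
  have hdiff : K g₁ - K g₂ =
      ((g₂ - g₁) / (e - 1).factorial) • koszulSum (fun i => (m i : ℚ)) univ M := by
    rw [hK, hK, ← map_sub, ← map_smul, smul_eq_C_mul]
    congr 1
    simp only [H, M, div_eq_mul_inv, one_mul, map_mul, map_sub]
    ring
  have hcard : #(univ : Finset (Fin r)) = r := by simp
  have hdeg : M.natDegree = e - 1 - r + #(univ : Finset (Fin r)) := by
    rw [natDegree_prod_X_add_C, card_range, hcard]
    omega
  have hlead : M.coeff (e - 1 - r + #(univ : Finset (Fin r))) = 1 :=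
    hdeg ▸ (monic_prod_X_add_C _ _).coeff_natDegree
  refine ⟨?_, ?_⟩
  · rw [← sub_eq_zero, ← coeff_sub, hdiff, coeff_smul,
      coeff_eq_zero_of_natDegree_lt ((natDegree_koszulSum_le _ _ hdeg.le).trans_lt (by omega)),
      smul_zero]
  · rw [← coeff_sub, hdiff, coeff_smul, show e - r - 1 = e - 1 - r by omega,
      coeff_koszulSum _ _ hdeg.le, hlead, hcard, Nat.sub_add_cancel hre, smul_eq_mul,
      ← Nat.factorial_mul_descFactorial hre]
    have hdesc : ((e - 1).descFactorial r : ℚ) ≠ 0 := by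
      exact_mod_cast (Nat.descFactorial_pos.2 hre).ne'
    push_cast
    field_simp
    ring

/-- Genus dependence of the Hilbert coefficients of the complete intersection: for
`H_g(x) = (1/(e−1)!)·∏_{j=1}^{e−1}(x+j)·(−μx+1−g)` and its Koszul alternating sum
`K(H_g)`, the coefficient of `x^{e−r}` is independent of `g` (i.e. `∂_g b₀ = 0`) and
`coeff_{e−r−1}(K(H_{g₁})) − coeff_{e−r−1}(K(H_{g₂})) = −(∏ m_i)·(g₁−g₂)/(e−1−r)!`
(i.e. `∂_g b₁ = −(∏ m_i)/(e−1−r)!`). -/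
theorem genus_derivative_hilbert_coeffs (e : ℕ) (he : 2 ≤ e) (μ : ℚ)
    (r : ℕ) (hr : 0 < r) (hre : r ≤ e - 1) (m : Fin r → ℕ) (hm : ∀ i, 0 < m i)
    (g₁ g₂ : ℚ) :
    let H : ℚ → Polynomial ℚ := fun g =>
      C (1 / ((e - 1).factorial : ℚ)) *
        (∏ j ∈ Finset.range (e - 1), (X + C ((j : ℚ) + 1))) *
        (-(C μ) * X + C (1 - g))
    let K : ℚ → Polynomial ℚ := fun g =>
      ∑ S : Finset (Fin r), (-1 : Polynomial ℚ) ^ S.card *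
        (H g).comp (X - C ((∑ i ∈ S, m i : ℕ) : ℚ))
    (K g₁).coeff (e - r) = (K g₂).coeff (e - r) ∧
    (K g₁).coeff (e - r - 1) - (K g₂).coeff (e - r - 1)
      = -(∏ i, (m i : ℚ)) * (g₁ - g₂) / ((e - 1 - r).factorial : ℚ) :=
  genus_derivative_hilbert_coeffs_general e he μ r hre m g₁ g₂
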